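/- arXiv:2505.01867 — 3 statements merged into one kernel-verified Lean document; each statement's English description precedes it below -/
import Mathlib

section
/- In the braid group B_7, for any ω = (ω_1, ..., ω_6) with ω_i ∈ {1,-1}, the braid e_ω · o_ω = (σ_2^{ω_2} σ_4^{ω_4} σ_6^{ω_6}) · (σ_1^{ω_1} σ_3^{ω_3} σ_5^{ω_5}) is conjugate in B_7 to α_ω = σ_1^{ω_1} σ_2^{ω_2} σ_3^{ω_3} σ_4^{ω_4} σ_5^{ω_5} σ_6^{ω_6}. -/
/-- The braid relations on `n` generators `σ₀, …, σ_{n-1}` (representing the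
Artin generators `σ₁, …, σ_n` of the braid group on `n+1` strands):
`σᵢσⱼ = σⱼσᵢ` for `|i - j| > 1` and `σᵢσⱼσᵢ = σⱼσᵢσⱼ` for `|i - j| = 1`. -/
def braidRels (n : ℕ) : Set (FreeGroup (Fin n)) :=
  { r | (∃ i j : Fin n, (i : ℕ) + 2 ≤ (j : ℕ) ∧
          r = FreeGroup.of i * FreeGroup.of j * (FreeGroup.of i)⁻¹ * (FreeGroup.of j)⁻¹) ∨
        (∃ i j : Fin n, (i : ℕ) + 1 = (j : ℕ) ∧
          r = FreeGroup.of i * FreeGroup.of j * FreeGroup.of i *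
              (FreeGroup.of j * FreeGroup.of i * FreeGroup.of j)⁻¹) }

/-- The braid group with `n` Artin generators, i.e. the braid group `B_{n+1}`
on `n+1` strands. -/
abbrev BraidGroup (n : ℕ) := PresentedGroup (braidRels n)

/-- The Artin generator; `braidGen i` represents `σ_{i+1}`. -/
def braidGen {n : ℕ} (i : Fin n) : BraidGroup n := PresentedGroup.of i

/-- Relators become trivial in the presented group. -/
lemma presented_rel_eq_one {α : Type*} {rels : Set (FreeGroup α)} {r : FreeGroup α}
    (h : r ∈ rels) : PresentedGroup.mk rels r = 1 := by
  have : r ∈ Subgroup.normalClosure rels := Subgroup.subset_normalClosure h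
  exact (QuotientGroup.eq_one_iff r).2 this

/-- Far-apart braid generators commute. -/
lemma braidGen_comm {n : ℕ} {i j : Fin n} (h : (i : ℕ) + 2 ≤ (j : ℕ)) :
    Commute (braidGen i) (braidGen j) := by
  have hr : (FreeGroup.of i * FreeGroup.of j * (FreeGroup.of i)⁻¹ * (FreeGroup.of j)⁻¹ :
      FreeGroup (Fin n)) ∈ braidRels n := Or.inl ⟨i, j, h, rfl⟩
  have h1 := presented_rel_eq_one hr
  have : braidGen i * braidGen j * (braidGen i)⁻¹ * (braidGen j)⁻¹ = 1 := by
    simpa [braidGen, PresentedGroup.of] using h1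
  have := mul_eq_one_iff_eq_inv.mp this
  unfold Commute SemiconjBy
  group at this ⊢
  -- this : braidGen i * braidGen j * (braidGen i)⁻¹ = braidGen j
  calc braidGen i * braidGen j
      = (braidGen i * braidGen j * (braidGen i)⁻¹) * braidGen i := by group
    _ = braidGen j * braidGen i := by rw [show braidGen i * braidGen j * (braidGen i)⁻¹
          = braidGen j from by group at this ⊢; exact this]

private lemma isConj_mul_comm {G : Type*} [Group G] (a b : G) : IsConj (a * b) (b * a) :=
  isConj_iff.2 ⟨b, by group⟩

/-- In `B₇`, for any `ω = (ω₁, …, ω₆)` with `ωᵢ ∈ {1,-1}`, the braid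
`e_ω · o_ω = (σ₂^{ω₂} σ₄^{ω₄} σ₆^{ω₆}) · (σ₁^{ω₁} σ₃^{ω₃} σ₅^{ω₅})` is
conjugate in `B₇` to `α_ω = σ₁^{ω₁} σ₂^{ω₂} σ₃^{ω₃} σ₄^{ω₄} σ₅^{ω₅} σ₆^{ω₆}`.
Here `ω i` stands for `ω_{i+1}` and `braidGen i` for `σ_{i+1}`. -/
theorem eo_conj_alpha_seven (ω : Fin 6 → ℤ) (hω : ∀ i, ω i = 1 ∨ ω i = -1) :
    IsConj
      ((braidGen (1 : Fin 6) ^ ω 1 * braidGen (3 : Fin 6) ^ ω 3 * braidGen (5 : Fin 6) ^ ω 5) *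
       (braidGen (0 : Fin 6) ^ ω 0 * braidGen (2 : Fin 6) ^ ω 2 * braidGen (4 : Fin 6) ^ ω 4))
      (braidGen (0 : Fin 6) ^ ω 0 * braidGen (1 : Fin 6) ^ ω 1 * braidGen (2 : Fin 6) ^ ω 2 *
       braidGen (3 : Fin 6) ^ ω 3 * braidGen (4 : Fin 6) ^ ω 4 * braidGen (5 : Fin 6) ^ ω 5) := by
  set A : Fin 6 → BraidGroup 6 := fun i => braidGen i ^ ω i with hA
  have c : ∀ i j : Fin 6, (i : ℕ) + 2 ≤ (j : ℕ) → Commute (A i) (A j) := fun i j h =>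
    (braidGen_comm h).zpow_zpow (ω i) (ω j)
  have c02 := c 0 2 (by decide)
  have c03 := c 0 3 (by decide)
  have c04 := c 0 4 (by decide)
  have c05 := c 0 5 (by decide)
  have c13 := c 1 3 (by decide)
  have c14 := c 1 4 (by decide)
  have c15 := c 1 5 (by decide)
  have c24 := c 2 4 (by decide)
  have c25 := c 2 5 (by decide)
  have c35 := c 3 5 (by decide)
  show IsConj ((A 1 * A 3 * A 5) * (A 0 * A 2 * A 4))
      (A 0 * A 1 * A 2 * A 3 * A 4 * A 5)
  have h1 : IsConj ((A 1 * A 3 * A 5) * (A 0 * A 2 * A 4))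
      (A 3 * (A 5 * (A 0 * (A 2 * (A 4 * A 1))))) := by
    have := isConj_mul_comm (A 1) (A 3 * (A 5 * (A 0 * (A 2 * A 4))))
    simpa [mul_assoc] using this
  have h2 : IsConj (A 3 * (A 5 * (A 0 * (A 2 * (A 4 * A 1)))))
      (A 5 * (A 0 * (A 2 * (A 4 * (A 1 * A 3))))) := by
    have := isConj_mul_comm (A 3) (A 5 * (A 0 * (A 2 * (A 4 * A 1))))
    simpa [mul_assoc] using this
  have h3 : IsConj (A 5 * (A 0 * (A 2 * (A 4 * (A 1 * A 3)))))
      (A 0 * (A 2 * (A 4 * (A 1 * (A 3 * A 5))))) := by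
    have := isConj_mul_comm (A 5) (A 0 * (A 2 * (A 4 * (A 1 * A 3))))
    simpa [mul_assoc] using this
  have h4 : IsConj (A 0 * (A 2 * (A 4 * (A 1 * (A 3 * A 5)))))
      (A 0 * (A 4 * (A 1 * (A 3 * (A 5 * A 2))))) := by
    rw [c02.left_comm]
    have := isConj_mul_comm (A 2) (A 0 * (A 4 * (A 1 * (A 3 * A 5))))
    simpa [mul_assoc] using this
  have h5 : IsConj (A 0 * (A 4 * (A 1 * (A 3 * (A 5 * A 2)))))
      (A 0 * (A 1 * (A 3 * (A 5 * (A 2 * A 4))))) := by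
    rw [c04.left_comm]
    have := isConj_mul_comm (A 4) (A 0 * (A 1 * (A 3 * (A 5 * A 2))))
    have h' := c14.left_comm (A 3 * (A 5 * A 2))
    simpa [mul_assoc] using this
  have h6 : IsConj (A 0 * (A 1 * (A 3 * (A 5 * (A 2 * A 4)))))
      (A 0 * (A 1 * (A 5 * (A 2 * (A 4 * A 3))))) := by
    rw [show A 0 * (A 1 * (A 3 * (A 5 * (A 2 * A 4))))
        = A 3 * (A 0 * (A 1 * (A 5 * (A 2 * A 4)))) from by
      rw [← c03.left_comm, ← c13.left_comm]]
    have := isConj_mul_comm (A 3) (A 0 * (A 1 * (A 5 * (A 2 * A 4))))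
    simpa [mul_assoc] using this
  have h7 : IsConj (A 0 * (A 1 * (A 5 * (A 2 * (A 4 * A 3)))))
      (A 0 * (A 1 * (A 2 * (A 4 * (A 3 * A 5))))) := by
    rw [show A 0 * (A 1 * (A 5 * (A 2 * (A 4 * A 3))))
        = A 5 * (A 0 * (A 1 * (A 2 * (A 4 * A 3)))) from by
      rw [← c05.left_comm, ← c15.left_comm]]
    have := isConj_mul_comm (A 5) (A 0 * (A 1 * (A 2 * (A 4 * A 3))))
    simpa [mul_assoc] using this
  have h8 : IsConj (A 0 * (A 1 * (A 2 * (A 4 * (A 3 * A 5)))))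
      (A 0 * (A 1 * (A 2 * (A 3 * (A 5 * A 4))))) := by
    rw [show A 0 * (A 1 * (A 2 * (A 4 * (A 3 * A 5))))
        = A 4 * (A 0 * (A 1 * (A 2 * (A 3 * A 5)))) from by
      rw [← c04.left_comm, ← c14.left_comm, ← c24.left_comm]]
    have := isConj_mul_comm (A 4) (A 0 * (A 1 * (A 2 * (A 3 * A 5))))
    simpa [mul_assoc] using this
  have h9 : IsConj (A 0 * (A 1 * (A 2 * (A 3 * (A 5 * A 4)))))
      (A 0 * A 1 * A 2 * A 3 * A 4 * A 5) := by
    rw [show A 0 * (A 1 * (A 2 * (A 3 * (A 5 * A 4))))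
        = A 5 * (A 0 * (A 1 * (A 2 * (A 3 * A 4)))) from by
      rw [← c05.left_comm, ← c15.left_comm, ← c25.left_comm, ← c35.left_comm]]
    have := isConj_mul_comm (A 5) (A 0 * (A 1 * (A 2 * (A 3 * A 4))))
    simpa [mul_assoc] using this
  exact ((((((((h1.trans h2).trans h3).trans h4).trans h5).trans h6).trans h7).trans h8).trans h9)
end

section
/- In the braid group B_N for N ≥ 3, for any ω = (ω_1, ..., ω_{N-1}) with ω_i ∈ {1,-1}, the braid e_ω · o_ω is conjugate in B_N to α_ω = σ_1^{ω_1} σ_2^{ω_2} ··· σ_{N-1}^{ω_{N-1}}, where e_ω is the product of σ_i^{ω_i} over even i in increasing order and o_ω is the product over odd i in increasing order. Consequently, (e_ω o_ω)^n is conjugate to (α_ω)^n for every n ≥ 1. -/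
section Helpers

variable {G : Type*} [Group G]

private lemma prod_range_succ_left (f : ℕ → G) (m : ℕ) :
    ((List.range (m + 1)).map f).prod
      = f 0 * ((List.range m).map (fun i => f (i + 1))).prod := by
  rw [List.range_succ_eq_map, List.map_cons, List.prod_cons, List.map_map]
  rfl

/-- Key combinatorial lemma: if `g i` and `g j` commute whenever `i + 2 ≤ j`,
then the product over even positions times the product over odd positions is
conjugate to the full ordered product, by a conjugator that commutes with
anything commuting with all `g i`, `i ≥ 1`. -/
private lemma key : ∀ (m : ℕ) (g : ℕ → G),
    (∀ i j, i + 2 ≤ j → Commute (g i) (g j)) →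
    ∃ c : G,
      ((List.range m).map (fun i => if (i + 1) % 2 = 0 then g i else 1)).prod *
      ((List.range m).map (fun i => if (i + 1) % 2 = 1 then g i else 1)).prod
        = c * ((List.range m).map g).prod * c⁻¹ ∧
      ∀ x : G, (∀ i, 1 ≤ i → Commute x (g i)) → Commute x c := by
  intro m
  induction m with
  | zero => exact fun g _ => ⟨1, by simp, fun x _ => Commute.one_right x⟩
  | succ m ih =>
    intro g hg
    obtain ⟨c', hc', hcomm'⟩ := ih (fun i => g (i + 1)) (fun i j h => hg _ _ (by omega))
    set E' : G := ((List.range m).map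
      (fun i => if (i + 1) % 2 = 0 then g (i + 1) else 1)).prod with hE'def
    set O' : G := ((List.range m).map
      (fun i => if (i + 1) % 2 = 1 then g (i + 1) else 1)).prod with hO'def
    set A' : G := ((List.range m).map (fun i => g (i + 1))).prod with hA'def
    have hE : ((List.range (m + 1)).map
        (fun i => if (i + 1) % 2 = 0 then g i else 1)).prod = O' := by
      rw [prod_range_succ_left, if_neg (by norm_num), one_mul, hO'def]
      exact congrArg List.prod
        (List.map_congr_left (fun i _ => if_congr (by omega) rfl rfl))
    have hO : ((List.range (m + 1)).map
        (fun i => if (i + 1) % 2 = 1 then g i else 1)).prod = g 0 * E' := by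
      rw [prod_range_succ_left, if_pos (by norm_num), hE'def]
      exact congrArg (g 0 * ·) (congrArg List.prod
        (List.map_congr_left (fun i _ => if_congr (by omega) rfl rfl)))
    have hA : ((List.range (m + 1)).map g).prod = g 0 * A' :=
      prod_range_succ_left g m
    have hg0c' : Commute (g 0) c' :=
      hcomm' (g 0) (fun i hi => hg 0 (i + 1) (by omega))
    refine ⟨O' * c', ?_, ?_⟩
    · rw [hE, hO, hA]
      calc O' * (g 0 * E')
          = O' * g 0 * (E' * O') * O'⁻¹ := by group
        _ = O' * g 0 * (c' * A' * c'⁻¹) * O'⁻¹ := by rw [hc']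
        _ = O' * (g 0 * c') * A' * c'⁻¹ * O'⁻¹ := by group
        _ = O' * (c' * g 0) * A' * c'⁻¹ * O'⁻¹ := by rw [hg0c'.eq]
        _ = (O' * c') * (g 0 * A') * (O' * c')⁻¹ := by group
    · intro x hx
      have hxO' : Commute x O' := by
        apply Commute.list_prod_right
        intro y hy
        obtain ⟨i, _, rfl⟩ := List.mem_map.mp hy
        by_cases h : (i + 1) % 2 = 1
        · rw [if_pos h]; exact hx (i + 1) (by omega)
        · rw [if_neg h]; exact Commute.one_right x
      exact hxO'.mul_right (hcomm' x (fun i hi => hx (i + 1) (by omega)))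

end Helpers

private lemma braid_comm {n : ℕ} (i j : Fin n) (h : (i : ℕ) + 2 ≤ (j : ℕ)) :
    Commute (braidGen i) (braidGen j) := by
  have hr : (FreeGroup.of i * FreeGroup.of j * (FreeGroup.of i)⁻¹ * (FreeGroup.of j)⁻¹)
      ∈ braidRels n := Or.inl ⟨i, j, h, rfl⟩
  have h1 : PresentedGroup.mk (braidRels n)
      (FreeGroup.of i * FreeGroup.of j * (FreeGroup.of i)⁻¹ * (FreeGroup.of j)⁻¹) = 1 := by
    have : (FreeGroup.of i * FreeGroup.of j * (FreeGroup.of i)⁻¹ * (FreeGroup.of j)⁻¹)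
        ∈ Subgroup.normalClosure (braidRels n) := Subgroup.subset_normalClosure hr
    exact (QuotientGroup.eq_one_iff _).2 this
  have h2 : braidGen i * braidGen j * (braidGen i)⁻¹ * (braidGen j)⁻¹ = 1 := by
    simpa [braidGen, PresentedGroup.of, map_mul, map_inv] using h1
  have h3 : braidGen i * braidGen j * (braidGen i)⁻¹ = braidGen j := by
    rwa [mul_inv_eq_one] at h2
  exact mul_inv_eq_iff_eq_mul.mp h3

private lemma ofFn_eq_range_map {G : Type*} [Group G] {m : ℕ} (f : Fin m → G) (F : ℕ → G)
    (h : ∀ i : Fin m, F i = f i) : List.ofFn f = (List.range m).map F := by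
  apply List.ext_getElem
  · simp
  · intro i h1 h2
    simp only [List.getElem_ofFn, List.getElem_map, List.getElem_range]
    rw [List.length_ofFn] at h1
    exact (h ⟨i, h1⟩).symm

/-- In `B_N` (`N ≥ 3`), for ω with entries in `{1,-1}` (here `ω i = ω_{i+1}`
and `braidGen i = σ_{i+1}`), the braid `e_ω · o_ω` is conjugate to
`α_ω = σ₁^{ω₁} ⋯ σ_{N-1}^{ω_{N-1}}`, where `e_ω` is the product of `σᵢ^{ωᵢ}`
over even `i` in increasing order and `o_ω` the product over odd `i` in
increasing order.  Consequently `(e_ω o_ω)ⁿ` is conjugate to `(α_ω)ⁿ` for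
every `n ≥ 1`. -/
theorem eo_conj_alpha (N : ℕ) (hN : 3 ≤ N) (ω : Fin (N - 1) → ℤ)
    (hω : ∀ i, ω i = 1 ∨ ω i = -1) :
    IsConj
      ((List.ofFn (fun i : Fin (N - 1) =>
          if ((i : ℕ) + 1) % 2 = 0 then braidGen i ^ ω i else 1)).prod *
       (List.ofFn (fun i : Fin (N - 1) =>
          if ((i : ℕ) + 1) % 2 = 1 then braidGen i ^ ω i else 1)).prod)
      ((List.ofFn (fun i : Fin (N - 1) => braidGen i ^ ω i)).prod) ∧
    ∀ n : ℕ, 1 ≤ n →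
      IsConj
        (((List.ofFn (fun i : Fin (N - 1) =>
            if ((i : ℕ) + 1) % 2 = 0 then braidGen i ^ ω i else 1)).prod *
          (List.ofFn (fun i : Fin (N - 1) =>
            if ((i : ℕ) + 1) % 2 = 1 then braidGen i ^ ω i else 1)).prod) ^ n)
        (((List.ofFn (fun i : Fin (N - 1) => braidGen i ^ ω i)).prod) ^ n) := by
  have key' := fun (g : ℕ → BraidGroup (N - 1)) => key (N - 1) g
  set g : ℕ → BraidGroup (N - 1) := fun i =>
    if h : i < N - 1 then braidGen (⟨i, h⟩ : Fin (N - 1)) ^ ω ⟨i, h⟩ else 1 with hgdef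
  have hg : ∀ i j, i + 2 ≤ j → Commute (g i) (g j) := by
    intro i j hij
    by_cases hi : i < N - 1
    · by_cases hj : j < N - 1
      · simp only [hgdef, dif_pos hi, dif_pos hj]
        exact (braid_comm ⟨i, hi⟩ ⟨j, hj⟩ hij).zpow_zpow _ _
      · simp only [hgdef, dif_neg hj]; exact Commute.one_right _
    · simp only [hgdef, dif_neg hi]; exact Commute.one_left _
  obtain ⟨c, hc, -⟩ := key' g hg
  have hEeq : (List.ofFn (fun i : Fin (N - 1) =>
      if ((i : ℕ) + 1) % 2 = 0 then braidGen i ^ ω i else 1))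
      = (List.range (N - 1)).map (fun i => if (i + 1) % 2 = 0 then g i else 1) := by
    apply ofFn_eq_range_map
    intro i
    simp [hgdef, i.isLt]
  have hOeq : (List.ofFn (fun i : Fin (N - 1) =>
      if ((i : ℕ) + 1) % 2 = 1 then braidGen i ^ ω i else 1))
      = (List.range (N - 1)).map (fun i => if (i + 1) % 2 = 1 then g i else 1) := by
    apply ofFn_eq_range_map
    intro i
    simp [hgdef, i.isLt]
  have hAeq : (List.ofFn (fun i : Fin (N - 1) => braidGen i ^ ω i))
      = (List.range (N - 1)).map g := by
    apply ofFn_eq_range_map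
    intro i
    simp [hgdef, i.isLt]
  rw [hEeq, hOeq, hAeq]
  have hconj : IsConj
      (((List.range (N - 1)).map (fun i => if (i + 1) % 2 = 0 then g i else 1)).prod *
        ((List.range (N - 1)).map (fun i => if (i + 1) % 2 = 1 then g i else 1)).prod)
      (((List.range (N - 1)).map g).prod) := by
    rw [hc]
    exact (isConj_iff.2 ⟨c, rfl⟩).symm
  refine ⟨hconj, fun n _ => ?_⟩
  rw [hc]
  rw [show (c * ((List.range (N - 1)).map g).prod * c⁻¹) ^ n
      = c * (((List.range (N - 1)).map g).prod) ^ n * c⁻¹ from (conj_pow ..)]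
  exact (isConj_iff.2 ⟨c, rfl⟩).symm
end

section
/- Let M' be a square nonnegative matrix in block form M' = [[M, A],[B, C]] with M square, and suppose M' is primitive (some power of M' is entrywise positive). Then not both A and B are zero matrices, and the Perron–Frobenius eigenvalue (spectral radius) of M is strictly less than that of M'. -/
/-!
Let `N = [[M, A], [B, C]]` and `D = [[M, 0], [0, 0]]`, so that `0 ≤ D ≤ N`, `D ≠ N`, and `D`
has the same spectral radius `ρ` as `M`. If `N ^ k > 0`, then in
`N ^ (2k+1) = N ^ k D N ^ k + N ^ k (N - D) N ^ k` the second summand is entrywise positive,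
hence `D ^ (2k+1) ≤ N ^ k D N ^ k ≤ (1 - ε) N ^ (2k+1)` entrywise for some `ε > 0`. By
Gelfand's formula `ρ X = lim ‖X ^ t‖ ^ (1 / t)` in the `ℓ^∞`-operator norm, which is monotone
in the moduli of the entries, this gives `ρ D ^ (2k+1) ≤ (1 - ε) ρ N ^ (2k+1)`; and `ρ N > 0`
because `N ^ (2k+1)` has a positive diagonal.
-/

/-- The Perron–Frobenius eigenvalue (spectral radius) of a real square matrix:
the supremum of the moduli of its complex eigenvalues. -/
noncomputable def perronRoot {n : Type*} [Fintype n] [DecidableEq n]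
    (M : Matrix n n ℝ) : ℝ :=
  sSup {r : ℝ | ∃ μ : ℂ, (M.map (Complex.ofReal)).charpoly.IsRoot μ ∧ r = ‖μ‖}

open Matrix Filter Topology

lemma pow_two_mul_add_one_eq_mul_mul {R : Type*} [Monoid R] (x : R) (k : ℕ) :
    x ^ (2 * k + 1) = x ^ k * x * x ^ k := by
  rw [show 2 * k + 1 = k + 1 + k by ring, pow_add, pow_succ]

section LinftyOpNorm

attribute [local instance] Matrix.linftyOpSeminormedAddCommGroup

variable {m n α β : Type*} [Fintype m] [Fintype n] [SeminormedAddCommGroup α]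
  [SeminormedAddCommGroup β]

lemma Matrix.linfty_opNorm_mono {A : Matrix m n α} {B : Matrix m n β}
    (h : ∀ i j, ‖A i j‖ ≤ ‖B i j‖) : ‖A‖ ≤ ‖B‖ := by
  rw [linfty_opNorm_def, linfty_opNorm_def, NNReal.coe_le_coe]
  exact Finset.sup_mono_fun fun i _ => Finset.sum_le_sum fun j _ => h i j

lemma Matrix.norm_entry_le_linfty_opNorm (A : Matrix m n α) (i : m) (j : n) :
    ‖A i j‖ ≤ ‖A‖ := by
  rw [linfty_opNorm_def, ← coe_nnnorm, NNReal.coe_le_coe]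
  exact (Finset.single_le_sum (f := fun j => ‖A i j‖₊) (fun _ _ => zero_le)
    (Finset.mem_univ j)).trans
    (Finset.le_sup (f := fun i => ∑ j, ‖A i j‖₊) (Finset.mem_univ i))

end LinftyOpNorm

section Entrywise

variable {l m n o R : Type*} [Fintype m]

lemma Matrix.mul_apply_le_mul_apply [Semiring R] [PartialOrder R] [IsOrderedRing R]
    {A A' : Matrix l m R} {B B' : Matrix m n R} (hA : ∀ i j, 0 ≤ A i j)
    (hB : ∀ i j, 0 ≤ B i j) (hAA' : ∀ i j, A i j ≤ A' i j) (hBB' : ∀ i j, B i j ≤ B' i j)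
    (i : l) (j : n) : (A * B) i j ≤ (A' * B') i j :=
  Finset.sum_le_sum fun k _ => mul_le_mul (hAA' i k) (hBB' k j) (hB k j) ((hA i k).trans (hAA' i k))

lemma Matrix.mul_mul_apply_pos [Fintype n] [Semiring R] [PartialOrder R] [IsStrictOrderedRing R]
    {A : Matrix l m R} {B : Matrix m n R} {C : Matrix n o R} (hA : ∀ i j, 0 < A i j)
    (hB : ∀ i j, 0 ≤ B i j) (hC : ∀ i j, 0 < C i j) {a : m} {b : n} (hab : 0 < B a b)
    (i : l) (j : o) : 0 < (A * B * C) i j := by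
  have hAB : ∀ i j, 0 ≤ (A * B) i j := fun i j =>
    Finset.sum_nonneg fun k _ => mul_nonneg (hA i k).le (hB k j)
  refine Finset.sum_pos' (fun k _ => mul_nonneg (hAB i k) (hC k j).le)
    ⟨b, Finset.mem_univ b, ?_⟩
  refine mul_pos (Finset.sum_pos' (fun k _ => mul_nonneg (hA i k).le (hB k b)) ?_) (hC b j)
  exact ⟨a, Finset.mem_univ a, mul_pos (hA i a) hab⟩

variable [DecidableEq m] [CommSemiring R] [PartialOrder R] [IsOrderedRing R]

lemma Matrix.pow_apply_le_mul_pow_apply {X Y : Matrix m m R} {c : R} (hX : ∀ i j, 0 ≤ X i j)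
    (hXY : ∀ i j, X i j ≤ c * Y i j) (t : ℕ) (i j : m) :
    (X ^ t) i j ≤ c ^ t * (Y ^ t) i j := by
  induction t generalizing j with
  | zero => simp
  | succ t ih =>
    rw [pow_succ X, pow_succ Y, mul_apply, mul_apply, Finset.mul_sum]
    refine Finset.sum_le_sum fun k _ => ?_
    calc (X ^ t) i k * X k j ≤ (c ^ t * (Y ^ t) i k) * (c * Y k j) :=
          mul_le_mul (ih k) (hXY k j) (hX k j) ((pow_apply_nonneg hX t i k).trans (ih k))
      _ = c ^ (t + 1) * ((Y ^ t) i k * Y k j) := by ring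

lemma Matrix.apply_self_pow_le_pow_apply_self {X : Matrix m m R} (hX : ∀ i j, 0 ≤ X i j)
    (i : m) (t : ℕ) : X i i ^ t ≤ (X ^ t) i i := by
  induction t with
  | zero => simp
  | succ t ih =>
    rw [pow_succ, pow_succ, mul_apply]
    exact (mul_le_mul_of_nonneg_right ih (hX i i)).trans <|
      Finset.single_le_sum (f := fun k => (X ^ t) i k * X k i)
        (fun k _ => mul_nonneg (pow_apply_nonneg hX t i k) (hX k i)) (Finset.mem_univ i)

end Entrywise

lemma Matrix.exists_pos_lt_one_mul_le {m n : Type*} [Finite m] [Finite n]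
    {P Q : Matrix m n ℝ} (hP : ∀ i j, 0 < P i j) :
    ∃ ε : ℝ, 0 < ε ∧ ε < 1 ∧ ∀ i j, ε * Q i j ≤ P i j := by
  have hsmall : ∀ᶠ ε in 𝓝 (0 : ℝ), ε < 1 ∧ ∀ i j, ε * Q i j ≤ P i j := by
    refine (eventually_lt_nhds one_pos).and (eventually_all.2 fun i => eventually_all.2 fun j => ?_)
    have h : Tendsto (fun ε : ℝ => ε * Q i j) (𝓝 0) (𝓝 0) :=
      (continuous_mul_const (Q i j)).tendsto' 0 0 (zero_mul _)
    exact (h.eventually_lt_const (hP i j)).mono fun ε hε => hε.le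
  obtain ⟨ε, ⟨hε1, hεP⟩, hε0⟩ :=
    ((hsmall.filter_mono nhdsWithin_le_nhds).and (self_mem_nhdsWithin (s := Set.Ioi 0))).exists
  exact ⟨ε, hε0, hε1, hεP⟩

lemma spectralRadius_pow {A : Type*} [NormedRing A] [NormedAlgebra ℂ A] [CompleteSpace A]
    [Nontrivial A] (a : A) (k : ℕ) : spectralRadius ℂ (a ^ k) = spectralRadius ℂ a ^ k := by
  refine le_antisymm (iSup₂_le fun z hz => ?_) (spectrum.spectralRadius_pow_le' a k)
  rw [spectrum.map_pow] at hz
  obtain ⟨w, hw, rfl⟩ := hz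
  rw [nnnorm_pow, ENNReal.coe_pow]
  exact pow_le_pow_left'
    (le_iSup₂ (f := fun w (_ : w ∈ spectrum ℂ a) => (‖w‖₊ : ENNReal)) w hw) k

attribute [local instance] Matrix.linftyOpNormedRing Matrix.linftyOpNormedAlgebra

section PerronRoot

variable {n : Type*} [Fintype n] [DecidableEq n]

lemma finite_perronRoot_set (X : Matrix n n ℝ) :
    {r : ℝ | ∃ μ : ℂ, (X.map Complex.ofReal).charpoly.IsRoot μ ∧ r = ‖μ‖}.Finite := by
  convert (Polynomial.finite_setOfPred_isRoot
    (charpoly_monic (X.map Complex.ofReal)).ne_zero).image (‖·‖) using 1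
  ext r
  simp [eq_comm]

lemma norm_le_perronRoot {X : Matrix n n ℝ} {μ : ℂ}
    (hμ : (X.map Complex.ofReal).charpoly.IsRoot μ) : ‖μ‖ ≤ perronRoot X :=
  le_csSup (finite_perronRoot_set X).bddAbove ⟨μ, hμ, rfl⟩

lemma exists_isRoot_norm_eq_perronRoot [Nonempty n] (X : Matrix n n ℝ) :
    ∃ μ : ℂ, (X.map Complex.ofReal).charpoly.IsRoot μ ∧ ‖μ‖ = perronRoot X := by
  have hdeg : 0 < (X.map Complex.ofReal).charpoly.degree := by
    rw [charpoly_degree_eq_dim]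
    exact_mod_cast Fintype.card_pos
  obtain ⟨μ, hμ⟩ := Complex.exists_root hdeg
  obtain ⟨ν, hν, h⟩ : perronRoot X ∈ _ :=
    Set.Nonempty.csSup_mem ⟨_, μ, hμ, rfl⟩ (finite_perronRoot_set X)
  exact ⟨ν, hν, h.symm⟩

lemma perronRoot_nonneg [Nonempty n] (X : Matrix n n ℝ) : 0 ≤ perronRoot X := by
  obtain ⟨μ, -, hμ⟩ := exists_isRoot_norm_eq_perronRoot X
  exact hμ ▸ norm_nonneg μ

lemma spectralRadius_map_ofReal [Nonempty n] (X : Matrix n n ℝ) :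
    spectralRadius ℂ (X.map Complex.ofReal) = ENNReal.ofReal (perronRoot X) := by
  refine le_antisymm (iSup₂_le fun μ hμ => ?_) ?_
  · rw [mem_spectrum_iff_isRoot_charpoly] at hμ
    rw [← ENNReal.ofReal_coe_nnreal, coe_nnnorm]
    exact ENNReal.ofReal_le_ofReal (norm_le_perronRoot hμ)
  · obtain ⟨μ, hμ, hμρ⟩ := exists_isRoot_norm_eq_perronRoot X
    rw [← hμρ, ← coe_nnnorm, ENNReal.ofReal_coe_nnreal]
    exact le_iSup₂ (f := fun μ (_ : μ ∈ spectrum ℂ (X.map Complex.ofReal)) =>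
      (‖μ‖₊ : ENNReal)) μ (mem_spectrum_iff_isRoot_charpoly.2 hμ)

lemma map_ofReal_pow (X : Matrix n n ℝ) (k : ℕ) :
    (X ^ k).map Complex.ofReal = X.map Complex.ofReal ^ k :=
  Matrix.map_pow X Complex.ofRealHom k

lemma norm_map_ofReal (X : Matrix n n ℝ) : ‖X.map Complex.ofReal‖ = ‖X‖ :=
  le_antisymm (linfty_opNorm_mono fun i j => (Complex.norm_real (X i j)).le)
    (linfty_opNorm_mono fun i j => (Complex.norm_real (X i j)).ge)

lemma tendsto_norm_pow_rpow_perronRoot [Nonempty n] (X : Matrix n n ℝ) :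
    Tendsto (fun t : ℕ => ‖X ^ t‖ ^ (1 / t : ℝ)) atTop (𝓝 (perronRoot X)) := by
  have h := spectrum.pow_norm_pow_one_div_tendsto_nhds_spectralRadius (X.map Complex.ofReal)
  rw [spectralRadius_map_ofReal] at h
  have h' := (ENNReal.tendsto_toReal ENNReal.ofReal_ne_top).comp h
  rw [ENNReal.toReal_ofReal (perronRoot_nonneg X)] at h'
  convert h' using 2 with t
  rw [Function.comp_apply, ENNReal.toReal_ofReal (by positivity), ← norm_map_ofReal (X ^ t),
    map_ofReal_pow]

lemma perronRoot_pow [Nonempty n] (X : Matrix n n ℝ) (k : ℕ) :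
    perronRoot (X ^ k) = perronRoot X ^ k := by
  have h := spectralRadius_pow (X.map Complex.ofReal) k
  rw [← map_ofReal_pow, spectralRadius_map_ofReal, spectralRadius_map_ofReal,
    ← ENNReal.ofReal_pow (perronRoot_nonneg X)] at h
  exact (ENNReal.ofReal_eq_ofReal_iff (perronRoot_nonneg _)
    (pow_nonneg (perronRoot_nonneg X) k)).1 h

lemma le_perronRoot_of_nonneg [Nonempty n] {X : Matrix n n ℝ} (hX : ∀ i j, 0 ≤ X i j)
    (i : n) : X i i ≤ perronRoot X := by
  refine ge_of_tendsto (tendsto_norm_pow_rpow_perronRoot X)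
    (eventually_atTop.2 ⟨1, fun t ht => ?_⟩)
  have hXt : X i i ^ t ≤ ‖X ^ t‖ :=
    (apply_self_pow_le_pow_apply_self hX i t).trans <|
      (Real.le_norm_self _).trans (norm_entry_le_linfty_opNorm (X ^ t) i i)
  calc X i i = (X i i ^ t) ^ (1 / t : ℝ) := by
        rw [one_div, Real.pow_rpow_inv_natCast (hX i i) (by omega)]
    _ ≤ ‖X ^ t‖ ^ (1 / t : ℝ) :=
        Real.rpow_le_rpow (pow_nonneg (hX i i) t) hXt (by positivity)

lemma perronRoot_le_mul_of_le [Nonempty n] {X Y : Matrix n n ℝ} {c : ℝ} (hc : 0 ≤ c)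
    (hX : ∀ i j, 0 ≤ X i j) (hXY : ∀ i j, X i j ≤ c * Y i j) :
    perronRoot X ≤ c * perronRoot Y := by
  refine le_of_tendsto_of_tendsto (tendsto_norm_pow_rpow_perronRoot X)
    ((tendsto_norm_pow_rpow_perronRoot Y).const_mul c) (eventually_atTop.2 ⟨1, fun t ht => ?_⟩)
  have hXt : ‖X ^ t‖ ≤ c ^ t * ‖Y ^ t‖ := by
    rw [← Real.norm_of_nonneg (pow_nonneg hc t), ← norm_smul]
    refine linfty_opNorm_mono fun i j => ?_
    have h := pow_apply_le_mul_pow_apply hX hXY t i j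
    rw [Matrix.smul_apply, smul_eq_mul, Real.norm_of_nonneg (pow_apply_nonneg hX t i j),
      Real.norm_of_nonneg ((pow_apply_nonneg hX t i j).trans h)]
    exact h
  calc ‖X ^ t‖ ^ (1 / t : ℝ) ≤ (c ^ t * ‖Y ^ t‖) ^ (1 / t : ℝ) :=
        Real.rpow_le_rpow (norm_nonneg _) hXt (by positivity)
    _ = c * ‖Y ^ t‖ ^ (1 / t : ℝ) := by
        rw [Real.mul_rpow (by positivity) (norm_nonneg _), one_div,
          Real.pow_rpow_inv_natCast hc (by omega)]

lemma exists_lt_one_pow_apply_le_mul_pow_apply {D N : Matrix n n ℝ} (hD : ∀ i j, 0 ≤ D i j)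
    (hDN : ∀ i j, D i j ≤ N i j) {a b : n} (hab : D a b < N a b) {k : ℕ}
    (hk : ∀ i j, 0 < (N ^ k) i j) :
    ∃ c : ℝ, 0 ≤ c ∧ c < 1 ∧
      ∀ i j, (D ^ (2 * k + 1)) i j ≤ c * (N ^ (2 * k + 1)) i j := by
  have hDk : ∀ i j, (D ^ k) i j ≤ (N ^ k) i j := by
    simpa using pow_apply_le_mul_pow_apply hD (c := 1) (by simpa using hDN) k
  have hDkD : ∀ i j, 0 ≤ (D ^ k * D) i j := fun i j =>
    Finset.sum_nonneg fun l _ => mul_nonneg (pow_apply_nonneg hD k i l) (hD l j)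
  have hDNk : ∀ i j, (D ^ (2 * k + 1)) i j ≤ (N ^ k * D * N ^ k) i j := by
    rw [pow_two_mul_add_one_eq_mul_mul]
    exact mul_apply_le_mul_apply hDkD (pow_apply_nonneg hD k)
      (mul_apply_le_mul_apply (pow_apply_nonneg hD k) hD hDk fun _ _ => le_rfl) hDk
  have hgap : ∀ i j, 0 < (N ^ k * (N - D) * N ^ k) i j :=
    mul_mul_apply_pos hk (fun i j => sub_nonneg.2 (hDN i j)) hk (sub_pos.2 hab)
  have hsplit : ∀ i j,
      (N ^ (2 * k + 1)) i j = (N ^ k * D * N ^ k) i j + (N ^ k * (N - D) * N ^ k) i j := by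
    intro i j
    rw [← Matrix.add_apply, ← add_mul, ← mul_add, add_sub_cancel,
      pow_two_mul_add_one_eq_mul_mul]
  obtain ⟨ε, hε0, hε1, hε⟩ := exists_pos_lt_one_mul_le hgap (Q := N ^ (2 * k + 1))
  refine ⟨1 - ε, by linarith, by linarith, fun i j => ?_⟩
  linarith [hDNk i j, hsplit i j, hε i j]

theorem perronRoot_lt_of_le_of_ne [Nonempty n] {D N : Matrix n n ℝ} (hD : ∀ i j, 0 ≤ D i j)
    (hDN : ∀ i j, D i j ≤ N i j) (hne : D ≠ N) {k : ℕ} (hk : ∀ i j, 0 < (N ^ k) i j) :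
    perronRoot D < perronRoot N := by
  obtain ⟨a, b, hab⟩ : ∃ a b, D a b < N a b := by
    by_contra! h
    exact hne (ext fun i j => le_antisymm (hDN i j) (h i j))
  have hN : ∀ i j, 0 ≤ N i j := fun i j => (hD i j).trans (hDN i j)
  obtain ⟨c, hc0, hc1, hDNm⟩ := exists_lt_one_pow_apply_le_mul_pow_apply hD hDN hab hk
  have hρN : 0 < perronRoot N ^ (2 * k + 1) := by
    obtain ⟨i⟩ := ‹Nonempty n›
    have hNm : 0 < (N ^ (2 * k + 1)) i i := by
      rw [pow_two_mul_add_one_eq_mul_mul]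
      exact mul_mul_apply_pos hk hN hk ((hD a b).trans_lt hab) i i
    rw [← perronRoot_pow]
    exact hNm.trans_le (le_perronRoot_of_nonneg (pow_apply_nonneg hN _) i)
  have hρ := perronRoot_le_mul_of_le hc0 (pow_apply_nonneg hD _) hDNm
  rw [perronRoot_pow, perronRoot_pow] at hρ
  exact (Odd.strictMono_pow (odd_two_mul_add_one k)).lt_iff_lt.1 (by nlinarith)

lemma perronRoot_fromBlocks_zero {p q : Type*} [Fintype p] [DecidableEq p] [Fintype q]
    [DecidableEq q] [Nonempty p] (M : Matrix p p ℝ) :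
    perronRoot (fromBlocks M 0 0 (0 : Matrix q q ℝ)) = perronRoot M := by
  have hroot : ∀ μ : ℂ,
      ((fromBlocks M 0 0 (0 : Matrix q q ℝ)).map Complex.ofReal).charpoly.IsRoot μ ↔
        (M.map Complex.ofReal).charpoly.IsRoot μ ∨ μ ^ Fintype.card q = 0 := by
    intro μ
    rw [fromBlocks_map, Matrix.map_zero _ Complex.ofReal_zero,
      Matrix.map_zero _ Complex.ofReal_zero, Matrix.map_zero _ Complex.ofReal_zero,
      charpoly_fromBlocks_zero₂₁, charpoly_zero,
      Polynomial.IsRoot.def, Polynomial.eval_mul, mul_eq_zero, Polynomial.eval_pow,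
      Polynomial.eval_X]
    rfl
  refine le_antisymm ?_ ?_
  · obtain ⟨μ, hμ, hμρ⟩ :=
      exists_isRoot_norm_eq_perronRoot (fromBlocks M 0 0 (0 : Matrix q q ℝ))
    rw [← hμρ]
    rcases (hroot μ).1 hμ with h | h
    · exact norm_le_perronRoot h
    · rw [eq_zero_of_pow_eq_zero h, norm_zero]
      exact perronRoot_nonneg M
  · obtain ⟨μ, hμ, hμρ⟩ := exists_isRoot_norm_eq_perronRoot M
    exact hμρ ▸ norm_le_perronRoot ((hroot μ).2 (Or.inl hμ))

end PerronRoot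

/-- Let `M' = [[M, A], [B, C]]` be a square nonnegative matrix in block form
with `M` square, and suppose `M'` is primitive (some power of `M'` is
entrywise positive).  Then `A` and `B` are not both zero, and the
Perron–Frobenius eigenvalue (spectral radius) of `M` is strictly less than
that of `M'`. -/
theorem perronRoot_block_lt (p q : ℕ) (hp : 0 < p) (hq : 0 < q)
    (M : Matrix (Fin p) (Fin p) ℝ) (A : Matrix (Fin p) (Fin q) ℝ)
    (B : Matrix (Fin q) (Fin p) ℝ) (C : Matrix (Fin q) (Fin q) ℝ)
    (hnonneg : ∀ i j, 0 ≤ Matrix.fromBlocks M A B C i j)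
    (hprim : ∃ k : ℕ, ∀ i j, 0 < (Matrix.fromBlocks M A B C ^ k) i j) :
    ¬(A = 0 ∧ B = 0) ∧ perronRoot M < perronRoot (Matrix.fromBlocks M A B C) := by
  have : Nonempty (Fin p) := ⟨⟨0, hp⟩⟩
  obtain ⟨k, hk⟩ := hprim
  have hAB : ¬(A = 0 ∧ B = 0) := by
    rintro ⟨rfl, rfl⟩
    have h := hk (Sum.inl ⟨0, hp⟩) (Sum.inr ⟨0, hq⟩)
    rw [fromBlocks_diagonal_pow, fromBlocks_apply₁₂, Matrix.zero_apply] at h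
    exact h.false
  refine ⟨hAB, ?_⟩
  rw [← perronRoot_fromBlocks_zero (q := Fin q) M]
  refine perronRoot_lt_of_le_of_ne ?_ ?_ ?_ hk
  · rintro (i | i) (j | j)
    · simpa using hnonneg (.inl i) (.inl j)
    all_goals simp
  · rintro (i | i) (j | j)
    · exact le_rfl
    · simpa using hnonneg (.inl i) (.inr j)
    · simpa using hnonneg (.inr i) (.inl j)
    · simpa using hnonneg (.inr i) (.inr j)
  · intro h
    obtain ⟨-, hA, hB, -⟩ := fromBlocks_inj.1 h
    exact hAB ⟨hA.symm, hB.symm⟩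
end
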